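/- arXiv:2004.03470 — 5 statements merged into one kernel-verified Lean document; each statement's English description precedes it below -/
import Mathlib

section
/- Let M be a monoid, n ≥ 1 and q ≥ 2. Suppose that x^n = x^(n+1) for all x in M, and that x·y·x^n = x^q·y·x^n for all x, y in M. Then x·y·x^n = x^n·y·x^n for all x, y in M. -/
theorem stmt2 {M : Type*} [Monoid M] (n q : ℕ) (hn : 1 ≤ n) (hq : 2 ≤ q)
    (h1 : ∀ x : M, x ^ n = x ^ (n + 1))
    (h2 : ∀ x y : M, x * y * x ^ n = x ^ q * y * x ^ n) :
    ∀ x y : M, x * y * x ^ n = x ^ n * y * x ^ n := by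
  have hA : ∀ x : M, ∀ m, n ≤ m → x ^ m = x ^ n := by
    intro x m hm
    induction m with
    | zero => omega
    | succ k ih =>
      rcases Nat.lt_or_ge n (k+1) with h | h
      · have hk : n ≤ k := by omega
        calc x ^ (k+1) = x ^ k * x := pow_succ x k
          _ = x ^ n * x := by rw [ih hk]
          _ = x ^ (n+1) := (pow_succ x n).symm
          _ = x ^ n := (h1 x).symm
      · have hkn : k + 1 = n := by omega
        rw [hkn]
  intro x y
  have step : ∀ k : ℕ, x * y * x ^ n = x ^ (k * (q-1)) * (x * y * x ^ n) := by
    intro k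
    induction k with
    | zero => simp
    | succ k ih =>
      have h2' : x * y * x ^ n = x ^ (q-1) * (x * y * x ^ n) := by
        calc x * y * x ^ n = x ^ q * y * x ^ n := h2 x y
          _ = x ^ (q-1) * x * y * x ^ n := by
              congr 2
              rw [← pow_succ]
              congr 1
              omega
          _ = x ^ (q-1) * (x * y * x ^ n) := by rw [mul_assoc, mul_assoc, mul_assoc]
      calc x * y * x ^ n = x ^ (q-1) * (x * y * x ^ n) := h2'
        _ = x ^ (q-1) * (x ^ (k * (q-1)) * (x * y * x ^ n)) := by rw [← ih]
        _ = x ^ ((k+1) * (q-1)) * (x * y * x ^ n) := by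
            rw [← mul_assoc, ← pow_add]
            congr 2
            ring
  have key := step n
  calc x * y * x ^ n = x ^ (n * (q-1)) * (x * y * x ^ n) := key
    _ = x ^ (n * (q-1)) * x * y * x ^ n := by rw [← mul_assoc, ← mul_assoc]
    _ = x ^ (n * (q-1) + 1) * y * x ^ n := by rw [← pow_succ]
    _ = x ^ n * y * x ^ n := by rw [hA x (n*(q-1)+1) (by cases q with | zero => omega | succ p => cases p with | zero => omega | succ r => have : n * (r+1+1-1) ≥ n := Nat.le_mul_of_pos_right n (by omega); omega)]
end

section
/- Let M be a monoid satisfying, for all elements, the identities x·y·x = x·y·x^2 and x^2·y·z·x^2 = x^2·y·x·z·x^2. Then M satisfies x·y·x·z·t·x = x·y·x·z·x·t·x for all x, y, z, t in M. -/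
theorem stmt6 {M : Type*} [Monoid M]
    (h1 : ∀ x y : M, x * y * x = x * y * x ^ 2)
    (h2 : ∀ x y z : M, x ^ 2 * y * z * x ^ 2 = x ^ 2 * y * x * z * x ^ 2) :
    ∀ x y z t : M, x * y * x * z * t * x = x * y * x * z * x * t * x := by
  intro x y z t
  have k1 : ∀ y : M, x * y * x = x * y * (x * x) := by
    intro y; simpa [pow_two] using h1 x y
  have k2 : ∀ y z : M, x * x * y * z * (x * x) = x * x * y * x * z * (x * x) := by
    intro y z; simpa [pow_two] using h2 x y z
  have L : x * y * x * z * t * x = x * y * ((x * x) * z * t * (x * x)) := by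
    have := k1 (y * x * z * t)
    have := k1 y
    calc x * y * x * z * t * x = x * (y * x * z * t) * x := by simp [mul_assoc]
    _ = x * (y * x * z * t) * (x * x) := k1 _
    _ = (x * y * x) * (z * t * (x * x)) := by simp [mul_assoc]
    _ = (x * y * (x * x)) * (z * t * (x * x)) := by rw [k1]
    _ = x * y * ((x * x) * z * t * (x * x)) := by simp [mul_assoc]
  have R : x * y * x * z * x * t * x = x * y * ((x * x) * z * x * t * (x * x)) := by
    calc x * y * x * z * x * t * x = x * (y * x * z * x * t) * x := by simp [mul_assoc]
    _ = x * (y * x * z * x * t) * (x * x) := k1 _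
    _ = (x * y * x) * (z * x * t * (x * x)) := by simp [mul_assoc]
    _ = (x * y * (x * x)) * (z * x * t * (x * x)) := by rw [k1]
    _ = x * y * ((x * x) * z * x * t * (x * x)) := by simp [mul_assoc]
  rw [L, R, k2]
end

section
/- Let M be a monoid satisfying, for all elements, the identities x·y·x·z·t·x = x·y·x·z·x·t·x and x·y·z·x·y = y·x·z·x·y. Then M satisfies x·y·h·x·s·y·t·x = y·x·h·x·s·y·t·x for all x, y, h, s, t in M. -/
theorem stmt7 {M : Type*} [Monoid M]
    (h1 : ∀ x y z t : M, x * y * x * z * t * x = x * y * x * z * x * t * x)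
    (h2 : ∀ x y z : M, x * y * z * x * y = y * x * z * x * y) :
    ∀ x y h s t : M, x * y * h * x * s * y * t * x = y * x * h * x * s * y * t * x := by
  intro x y h s t
  calc x * y * h * x * s * y * t * x
      = x * (y * h) * x * s * (y * t) * x := by simp [mul_assoc]
    _ = x * (y * h) * x * s * x * (y * t) * x := h1 x (y * h) s (y * t)
    _ = x * y * (h * x * s) * x * y * (t * x) := by simp [mul_assoc]
    _ = y * x * (h * x * s) * x * y * (t * x) := by rw [h2 x y (h * x * s)]
    _ = y * (x * h * x * s * x * (y * t) * x) := by simp [mul_assoc]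
    _ = y * (x * h * x * s * (y * t) * x) := by rw [← h1 x h s (y * t)]
    _ = y * x * h * x * s * y * t * x := by simp [mul_assoc]
end

section
/- Let M be a monoid and n ≥ 1. Suppose that x·y·x = x·y·x^2 for all x, y in M, and that x·y·t1·x^n·t2·y^n = y·x·t1·x^n·t2·y^n for all x, y, t1, t2 in M. Then M satisfies x·y·t1·x·t2·y = y·x·t1·x·t2·y for all x, y, t1, t2 in M. -/
theorem stmt14 {M : Type*} [Monoid M] (n : ℕ) (hn : 1 ≤ n)
    (h1 : ∀ x y : M, x * y * x = x * y * x ^ 2)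
    (h2 : ∀ x y t1 t2 : M,
      x * y * t1 * x ^ n * t2 * y ^ n = y * x * t1 * x ^ n * t2 * y ^ n) :
    ∀ x y t1 t2 : M, x * y * t1 * x * t2 * y = y * x * t1 * x * t2 * y := by
  have L : ∀ (a b : M) (k : ℕ), a * b * a ^ (k + 1) = a * b * a := by
    intro a b k
    induction k with
    | zero => rw [pow_one]
    | succ k ih =>
      calc a * b * a ^ (k + 2) = a * b * a ^ (k + 1) * a := by
            rw [pow_succ, ← mul_assoc]
        _ = a * b * a * a := by rw [ih]
        _ = a * b * a ^ 2 := by rw [pow_two, mul_assoc]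
        _ = a * b * a := (h1 a b).symm
  obtain ⟨m, rfl⟩ : ∃ m, n = m + 1 := ⟨n - 1, (Nat.succ_pred_eq_of_pos hn).symm⟩
  intro x y t1 t2
  calc x * y * t1 * x * t2 * y
      = x * (y * (t1 * x * t2) * y) := by simp [mul_assoc]
    _ = x * (y * (t1 * x * t2) * y ^ (m + 1)) := by rw [L]
    _ = x * (y * t1) * x * (t2 * y ^ (m + 1)) := by simp [mul_assoc]
    _ = x * (y * t1) * x ^ (m + 1) * (t2 * y ^ (m + 1)) := by rw [L]
    _ = x * y * t1 * x ^ (m + 1) * t2 * y ^ (m + 1) := by simp [mul_assoc]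
    _ = y * x * t1 * x ^ (m + 1) * t2 * y ^ (m + 1) := h2 x y t1 t2
    _ = y * (x * t1 * x ^ (m + 1)) * (t2 * y ^ (m + 1)) := by simp [mul_assoc]
    _ = y * (x * t1 * x) * (t2 * y ^ (m + 1)) := by rw [L]
    _ = y * (x * t1 * x * t2) * y ^ (m + 1) := by simp [mul_assoc]
    _ = y * (x * t1 * x * t2) * y := by rw [L]
    _ = y * x * t1 * x * t2 * y := by simp [mul_assoc]
end

section
/- Let M be a monoid and n ≥ 1. Suppose that for all elements of M: x^n = x^(n+1); x·t·y·z·x·y = x·t·y·z·y·x; and x·y·z·x·y = y·x·z·x·y. Then M satisfies x·y·t·x^n·y^n = y·x·t·x^n·y^n for all x, y, t in M. -/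
theorem stmt15 {M : Type*} [Monoid M] (n : ℕ) (hn : 1 ≤ n)
    (h1 : ∀ x : M, x ^ n = x ^ (n + 1))
    (h2 : ∀ x t y z : M, x * t * y * z * x * y = x * t * y * z * y * x)
    (h3 : ∀ x y z : M, x * y * z * x * y = y * x * z * x * y) :
    ∀ x y t : M, x * y * t * x ^ n * y ^ n = y * x * t * x ^ n * y ^ n := by
  intro x y t
  have swap : ∀ c d : M, x * (y * (c * (x * (y * d)))) = x * (y * (c * (y * (x * d)))) := by
    intro c d
    have := congrArg (· * d) (h2 x 1 y c)
    simpa [mul_assoc] using this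
  have swap2 : ∀ c d : M, y * (x * (c * (y * (x * d)))) = y * (x * (c * (x * (y * d)))) := by
    intro c d
    have := congrArg (· * d) (h2 y 1 x c)
    simpa [mul_assoc] using this
  have key1 : ∀ m : ℕ, x * (y * (t * (x ^ n * (x * y ^ (m + 1)))))
      = x * (y * (t * (x ^ n * (y ^ m * (x * y))))) := by
    intro m
    induction m with
    | zero => simp
    | succ m ih =>
      calc x * (y * (t * (x ^ n * (x * y ^ (m + 2)))))
          = x * (y * (t * (x ^ n * (x * y ^ (m + 1)))) ) * y := by
            simp [pow_succ, mul_assoc]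
        _ = x * (y * (t * (x ^ n * (y ^ m * (x * y))))) * y := by rw [ih]
        _ = x * (y * ((t * (x ^ n * y ^ m)) * (x * (y * y)))) := by
            simp [mul_assoc]
        _ = x * (y * ((t * (x ^ n * y ^ m)) * (y * (x * y)))) := swap _ _
        _ = x * (y * (t * (x ^ n * (y ^ (m + 1) * (x * y))))) := by
            simp [pow_succ, mul_assoc]
  have key2 : ∀ m : ℕ, y * (x * (t * (x ^ n * (y ^ m * (x * y)))))
      = y * (x * (t * (x ^ n * (x * y ^ (m + 1))))) := by
    intro m
    induction m with
    | zero => simp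
    | succ m ih =>
      calc y * (x * (t * (x ^ n * (y ^ (m + 1) * (x * y)))))
          = y * (x * ((t * (x ^ n * y ^ m)) * (y * (x * y)))) := by
            simp [pow_succ, mul_assoc]
        _ = y * (x * ((t * (x ^ n * y ^ m)) * (x * (y * y)))) := swap2 _ _
        _ = y * (x * (t * (x ^ n * (y ^ m * (x * y))))) * y := by
            simp [mul_assoc]
        _ = y * (x * (t * (x ^ n * (x * y ^ (m + 1))))) * y := by rw [ih]
        _ = y * (x * (t * (x ^ n * (x * y ^ (m + 2))))) := by
            simp [pow_succ, mul_assoc]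
  calc x * y * t * x ^ n * y ^ n
      = x * (y * (t * (x ^ (n + 1) * y ^ (n + 1)))) := by
        rw [← h1 x, ← h1 y]; simp [mul_assoc]
    _ = x * (y * (t * (x ^ n * (x * y ^ (n + 1))))) := by
        simp [pow_succ, mul_assoc]
    _ = x * (y * (t * (x ^ n * (y ^ n * (x * y))))) := key1 n
    _ = x * y * (t * (x ^ n * y ^ n)) * x * y := by simp [mul_assoc]
    _ = y * x * (t * (x ^ n * y ^ n)) * x * y := h3 x y _
    _ = y * (x * (t * (x ^ n * (y ^ n * (x * y))))) := by simp [mul_assoc]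
    _ = y * (x * (t * (x ^ n * (x * y ^ (n + 1))))) := key2 n
    _ = y * (x * (t * (x ^ (n + 1) * y ^ (n + 1)))) := by
        simp [pow_succ, mul_assoc]
    _ = y * x * t * x ^ n * y ^ n := by
        rw [← h1 x, ← h1 y]; simp [mul_assoc]
end
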